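/- (Evaluation agreement under padding) Let Γ be a static context and μ₁, μ₂ stores with dom(μ(Γ)) ⊆ dom(μ₁), dom(⌈μ⌉(Γ)) ⊆ dom(μ₂), and for each declared x: μ₂(x_i) = μ₁(x_i) for i ≤ Γ(x), and μ₂(x_i) = 0 for i in the padding region. If Γ ⊢ e : t, then eval_{Γ,μ₁}(e_i) = eval_{⌈Γ⌉_M,μ₂}(e_i) for all i ≤ t. -/

import Mathlib

/-- Rounding up to the nearest multiple of `M`. -/
noncomputable def roundUp (M d : ℕ) : ℕ := sInf {m : ℕ | ∃ n : ℕ, m = n * M ∧ d ≤ m}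

/-- Tensor types are tuples of naturals. -/
abbrev Ty := List ℕ
/-- Multi-indices. -/
abbrev Index := List ℕ

/-- `IdxLe i t`: the multi-index `i` (with components in {1,2,…}) is bounded by `t`. -/
def IdxLe (i t : Index) : Prop :=
  i.length = t.length ∧ ∀ l, l < t.length → 1 ≤ i.getD l 0 ∧ i.getD l 0 ≤ t.getD l 0

/-- Swap the `m`-th and `n`-th components (1-based). -/
def swapIdx (t : List ℕ) (m n : ℕ) : List ℕ :=
  (t.set (m-1) (t.getD (n-1) 0)).set (n-1) (t.getD (m-1) 0)

/-- Delete the `m`-th and `n`-th components (1-based, `m < n`). -/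
def delete2 (t : List ℕ) (m n : ℕ) : List ℕ :=
  (t.eraseIdx (n-1)).eraseIdx (m-1)

/-- Insert value `l` at the `m`-th and `n`-th positions (1-based, `m < n`). -/
def insert2 (i : List ℕ) (m n l : ℕ) : List ℕ :=
  (i.insertIdx (m-1) l).insertIdx (n-1) l

/-- Pad a tensor type componentwise. -/
noncomputable def padT (M : ℕ) (t : Ty) : Ty := t.map (roundUp M)

/-- The padding region of a type: indices within the padded bounds but not the original ones. -/
def PadReg (M : ℕ) (t : Ty) (i : Index) : Prop := ¬ IdxLe i t ∧ IdxLe i (padT M t)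

inductive Op | add | sub | mul | div
deriving DecidableEq

/-- Expressions of the tensor model language. -/
inductive Expr
| var : String → Expr
| paren : Expr → Expr
| binop : Op → Expr → Expr → Expr
| prod : Expr → Expr → Expr
| trans : Expr → ℕ → ℕ → Expr
| contr : Expr → ℕ → ℕ → Expr

/-- A static context maps identifiers to tensor types. -/
abbrev Ctx := String → Option Ty

/-- Componentwise padding of a static context. -/
noncomputable def padCtx (M : ℕ) (Γ : Ctx) : Ctx := fun x => (Γ x).map (padT M)

/-- The typing rules of the tensor model language. -/
inductive HasTy (Γ : Ctx) : Expr → Ty → Prop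
| var {x t} : Γ x = some t → HasTy Γ (.var x) t
| paren {e t} : HasTy Γ e t → HasTy Γ (.paren e) t
| prod {e₀ e₁ t₀ t₁} : HasTy Γ e₀ t₀ → HasTy Γ e₁ t₁ → HasTy Γ (.prod e₀ e₁) (t₀ ++ t₁)
| trans {e t m n} : HasTy Γ e t → 1 ≤ m → m < n → n ≤ t.length →
    HasTy Γ (.trans e m n) (swapIdx t m n)
| contr {e t m n} : HasTy Γ e t → 1 ≤ m → m < n → n ≤ t.length →
    t.getD (m-1) 0 = t.getD (n-1) 0 → HasTy Γ (.contr e m n) (delete2 t m n)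
| elem {op e₀ e₁ t} : HasTy Γ e₀ t → HasTy Γ e₁ t → HasTy Γ (.binop op e₀ e₁) t
| smul {e₀ e₁ t} : HasTy Γ e₀ [] → HasTy Γ e₁ t → HasTy Γ (.binop .mul e₀ e₁) t
| sdiv {e₀ e₁ t} : HasTy Γ e₀ t → HasTy Γ e₁ [] → HasTy Γ (.binop .div e₀ e₁) t

/-- Syntax-directed type inference. -/
def inferTy (Γ : Ctx) : Expr → Option Ty
| .var x => Γ x
| .paren e => inferTy Γ e
| .prod e₀ e₁ => do pure ((← inferTy Γ e₀) ++ (← inferTy Γ e₁))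
| .trans e m n => do
    let t ← inferTy Γ e
    if 1 ≤ m ∧ m < n ∧ n ≤ t.length then pure (swapIdx t m n) else none
| .contr e m n => do
    let t ← inferTy Γ e
    if 1 ≤ m ∧ m < n ∧ n ≤ t.length ∧ t.getD (m-1) 0 = t.getD (n-1) 0 then
      pure (delete2 t m n) else none
| .binop op e₀ e₁ => do
    let t₀ ← inferTy Γ e₀
    let t₁ ← inferTy Γ e₁
    if t₀ = t₁ then pure t₀
    else if op = .mul ∧ t₀ = [] then pure t₁
    else if op = .div ∧ t₁ = [] then pure t₀
    else none

/-- The value domain `𝕍 ∪ {•}`: `none` is the undefined value `•`. -/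
abbrev W (V : Type) := Option V

/-- Extended addition: `•` is absorbing. -/
def wadd {V : Type} [Add V] : W V → W V → W V
| some a, some b => some (a + b)
| _, _ => none

def wsub {V : Type} [Sub V] : W V → W V → W V
| some a, some b => some (a - b)
| _, _ => none

def wmul {V : Type} [Mul V] : W V → W V → W V
| some a, some b => some (a * b)
| _, _ => none

/-- Controlled division on `𝕍 ∪ {•}`: `0/0 = 0`, `0/• = 0`, otherwise `•` absorbs
    and division by zero is undefined. -/
def wdiv {V : Type} [Field V] [DecidableEq V] : W V → W V → W V
| some a, some b => if b = 0 then (if a = 0 then some 0 else none) else some (a / b)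
| some a, none => if a = 0 then some 0 else none
| none, _ => none

def applyOp {V : Type} [Field V] [DecidableEq V] : Op → W V → W V → W V
| .add => wadd
| .sub => wsub
| .mul => wmul
| .div => wdiv

/-- A dynamic store: a partial map from subscripted identifiers to `𝕍 ∪ {•}`. -/
abbrev Store (V : Type) := String × Index → Option (W V)

/-- Denotational semantics of expression evaluation; `none` means evaluation is stuck
    (not well-defined), `some w` means the result is the value `w ∈ 𝕍 ∪ {•}`. -/
def eval {V : Type} [Field V] [DecidableEq V] (Γ : Ctx) (μ : Store V) :
    Expr → Index → Option (W V)
| .var x, i => μ (x, i)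
| .paren e, i => eval Γ μ e i
| .prod e₀ e₁, i => do
    let t₀ ← inferTy Γ e₀
    let v₀ ← eval Γ μ e₀ (i.take t₀.length)
    let v₁ ← eval Γ μ e₁ (i.drop t₀.length)
    pure (wmul v₀ v₁)
| .trans e m n, i => eval Γ μ e (swapIdx i m n)
| .contr e m n, i => do
    let t ← inferTy Γ e
    let vs ← (List.range (t.getD (m-1) 0)).mapM (fun l => eval Γ μ e (insert2 i m n (l+1)))
    pure (vs.foldl wadd (some 0))
| .binop op e₀ e₁, i => do
    let t₀ ← inferTy Γ e₀
    let t₁ ← inferTy Γ e₁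
    if op = .mul ∧ t₀ = [] then
      let v₀ ← eval Γ μ e₀ []
      let v₁ ← eval Γ μ e₁ i
      pure (wmul v₀ v₁)
    else if op = .div ∧ t₁ = [] then
      let v₀ ← eval Γ μ e₀ i
      let v₁ ← eval Γ μ e₁ []
      pure (wdiv v₀ v₁)
    else
      let v₀ ← eval Γ μ e₀ i
      let v₁ ← eval Γ μ e₁ i
      pure (applyOp op v₀ v₁)

open Classical

/-- The unique initial store determined by `Γ` and the ambient values `v`. -/
noncomputable def initStore {V : Type} (Γ : Ctx) (v : String → Index → W V) : Store V :=
  fun p => match Γ p.1 with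
  | some t => if IdxLe p.2 t then some (v p.1 p.2) else none
  | none => none

/-- The unique padded initial store: values on the original domain, zero on padding. -/
noncomputable def initStoreP {V : Type} [Zero V] (M : ℕ) (Γ : Ctx)
    (v : String → Index → W V) : Store V :=
  fun p => match Γ p.1 with
  | some t =>
      if IdxLe p.2 t then some (v p.1 p.2)
      else if IdxLe p.2 (padT M t) then some (some 0)
      else none
  | none => none

/-- A statement `x = e`. -/
abbrev Stmt := String × Expr

/-- Well-formedness of a statement list in context `Γ`. -/
def Ok (Γ : Ctx) (ss : List Stmt) : Prop :=
  ∀ s ∈ ss, ∃ t, Γ s.1 = some t ∧ HasTy Γ s.2 t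

/-- Evaluation of a single assignment statement (rule ev-stmt). -/
inductive StepStmt {V : Type} [Field V] [DecidableEq V] (Γ : Ctx) :
    Store V → Stmt → Store V → Prop
| mk {μ : Store V} {x e t} :
    Γ x = some t →
    (∀ i, IdxLe i t → μ (x, i) ≠ none) →
    (∀ i, IdxLe i t → (eval Γ μ e i).isSome) →
    StepStmt Γ μ (x, e)
      (fun p => if p.1 = x ∧ IdxLe p.2 t then eval Γ μ e p.2 else μ p)

/-- Evaluation of a statement sequence. -/
inductive StepStmts {V : Type} [Field V] [DecidableEq V] (Γ : Ctx) :
    Store V → List Stmt → Store V → Prop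
| nil {μ} : StepStmts Γ μ [] μ
| cons {μ μ' μ'' s ss} : StepStmt Γ μ s μ' → StepStmts Γ μ' ss μ'' →
    StepStmts Γ μ (s :: ss) μ''

/-- Evaluation of a single assignment statement with a padded store (rule ev-pad-stmt). -/
inductive StepStmtP {V : Type} [Field V] [DecidableEq V] (M : ℕ) (Γ : Ctx) :
    Store V → Stmt → Store V → Prop
| mk {μ : Store V} {x e t} :
    Γ x = some t →
    (∀ i, IdxLe i (padT M t) → μ (x, i) ≠ none) →
    (∀ i, IdxLe i (padT M t) → (eval (padCtx M Γ) μ e i).isSome) →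
    StepStmtP M Γ μ (x, e)
      (fun p => if p.1 = x ∧ IdxLe p.2 (padT M t) then eval (padCtx M Γ) μ e p.2 else μ p)

inductive StepStmtsP {V : Type} [Field V] [DecidableEq V] (M : ℕ) (Γ : Ctx) :
    Store V → List Stmt → Store V → Prop
| nil {μ} : StepStmtsP M Γ μ [] μ
| cons {μ μ' μ'' s ss} : StepStmtP M Γ μ s μ' → StepStmtsP M Γ μ' ss μ'' →
    StepStmtsP M Γ μ (s :: ss) μ''

/-!
The agreement is proved by induction on the typing derivation, for a stronger invariant
(`IsPadding`) that also describes the padded evaluation on the padding region, over which a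
padded contraction sums. There every value is `0` or `•`. A `•` there cannot come from the
store, which is `0` on padding: it is a `•` of the unpadded evaluation broadcast along padded
coordinates (by a scalar factor, a product factor or a contraction), so the unpadded evaluation
is `•` at every in-bounds index that agrees with the padding index on its in-bounds coordinates
(`AgreesInBounds`). Hence the padding terms of a padded contraction either all vanish, or one of
them is `•` and then so is a term of the unpadded sum.
-/

theorem le_roundUp {M : ℕ} (hM : 1 ≤ M) (d : ℕ) : d ≤ roundUp M d := by
  obtain ⟨n, -, hd⟩ := Nat.sInf_mem (⟨d * M, d, rfl, Nat.le_mul_of_pos_right d hM⟩ :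
    {m : ℕ | ∃ n : ℕ, m = n * M ∧ d ≤ m}.Nonempty)
  exact hd

theorem roundUp_zero (M : ℕ) : roundUp M 0 = 0 :=
  Nat.sInf_eq_zero.2 (Or.inl ⟨0, by simp, le_rfl⟩)

theorem pos_of_lt_roundUp {M d l : ℕ} (h : l < roundUp M d) : 0 < d :=
  Nat.pos_of_ne_zero fun hd => by simp [hd, roundUp_zero] at h

section Padding

variable (M : ℕ)

@[simp] theorem padT_length (t : Ty) : (padT M t).length = t.length := by simp [padT]

theorem getD_padT (t : Ty) (l : ℕ) : (padT M t).getD l 0 = roundUp M (t.getD l 0) := by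
  rw [← roundUp_zero M, padT, List.getD_map, roundUp_zero]

theorem padT_append (t₀ t₁ : Ty) : padT M (t₀ ++ t₁) = padT M t₀ ++ padT M t₁ :=
  List.map_append

theorem padT_eq_nil {t : Ty} : padT M t = [] ↔ t = [] := List.map_eq_nil_iff

theorem padT_swapIdx (t : Ty) (m n : ℕ) : padT M (swapIdx t m n) = swapIdx (padT M t) m n := by
  rw [swapIdx, swapIdx, getD_padT, getD_padT]
  simp only [padT, List.map_set]

theorem padT_delete2 (t : Ty) (m n : ℕ) : padT M (delete2 t m n) = delete2 (padT M t) m n := by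
  simp [padT, delete2, List.eraseIdx_map]

variable {M}

theorem IdxLe.padT (hM : 1 ≤ M) {i t : Index} (h : IdxLe i t) : IdxLe i (padT M t) := by
  refine ⟨by rw [h.1, padT_length], fun l hl => ?_⟩
  rw [padT_length] at hl
  obtain ⟨h₁, h₂⟩ := h.2 l hl
  exact ⟨h₁, (getD_padT M t l).symm ▸ h₂.trans (le_roundUp hM _)⟩

end Padding

section Coordinates

variable {P : ℕ → ℕ → ℕ → Prop}

/-- Stating the index lemmas for an arbitrary coordinatewise relation gives them at once for
`IdxLe` and for `AgreesInBounds`. -/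
def Coordwise (P : ℕ → ℕ → ℕ → Prop) (i i' t : List ℕ) : Prop :=
  i.length = t.length ∧ i'.length = t.length ∧
    ∀ l < t.length, P (i.getD l 0) (i'.getD l 0) (t.getD l 0)

theorem idxLe_iff_coordwise {i t : Index} :
    IdxLe i t ↔ Coordwise (fun a _ b => 1 ≤ a ∧ a ≤ b) i i t := by
  simp [IdxLe, Coordwise]

theorem coordwise_append_iff {i i' t₀ t₁ : List ℕ} :
    Coordwise P i i' (t₀ ++ t₁) ↔
      Coordwise P (i.take t₀.length) (i'.take t₀.length) t₀ ∧
        Coordwise P (i.drop t₀.length) (i'.drop t₀.length) t₁ := by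
  simp only [Coordwise, List.length_append, List.length_take, List.length_drop,
    List.getD_eq_getElem?_getD, List.getElem?_take, List.getElem?_drop, List.getElem?_append]
  constructor
  · rintro ⟨hi, hi', h⟩
    refine ⟨⟨by omega, by omega, fun l hl => ?_⟩, ⟨by omega, by omega, fun l hl => ?_⟩⟩
    · simpa [hl] using h l (by omega)
    · simpa [show ¬ t₀.length + l < t₀.length by omega] using h (t₀.length + l) (by omega)
  · rintro ⟨⟨hi, hi', h₀⟩, ⟨hj, hj', h₁⟩⟩
    refine ⟨by omega, by omega, fun l hl => ?_⟩
    by_cases hl₀ : l < t₀.length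
    · simpa [hl₀] using h₀ l hl₀
    · simpa [hl₀, show t₀.length + (l - t₀.length) = l by omega] using h₁ (l - t₀.length) (by omega)

theorem getD_swapIdx {x : List ℕ} {m n : ℕ} (hm : m - 1 < x.length) (hn : n - 1 < x.length)
    (j : ℕ) : (swapIdx x m n).getD j 0 = x.getD (Equiv.swap (m - 1) (n - 1) j) 0 := by
  simp only [swapIdx, List.getD_eq_getElem?_getD, List.getElem?_set, List.length_set,
    Equiv.swap_apply_def]
  split_ifs <;> subst_vars <;> simp_all

@[simp] theorem swapIdx_length (x : List ℕ) (m n : ℕ) : (swapIdx x m n).length = x.length := by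
  simp [swapIdx]

theorem coordwise_swapIdx_iff {i i' t : List ℕ} {m n : ℕ} (hm : m - 1 < t.length)
    (hn : n - 1 < t.length) :
    Coordwise P (swapIdx i m n) (swapIdx i' m n) t ↔ Coordwise P i i' (swapIdx t m n) := by
  set σ := Equiv.swap (m - 1) (n - 1)
  have hσ : ∀ l < t.length, σ l < t.length := by
    intro l hl
    simp only [σ, Equiv.swap_apply_def]
    split_ifs <;> omega
  simp only [Coordwise, swapIdx_length]
  refine and_congr_right fun hi => and_congr_right fun hi' => ?_
  simp only [getD_swapIdx (hi ▸ hm) (hi ▸ hn), getD_swapIdx (hi' ▸ hm) (hi' ▸ hn),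
    getD_swapIdx hm hn]
  constructor <;> intro h l hl <;> simpa [σ] using h (σ l) (hσ l hl)

theorem coordwise_insertIdx_iff {i i' t : List ℕ} {k a a' : ℕ} (hk : k < t.length) :
    Coordwise P (i.insertIdx k a) (i'.insertIdx k a') t ↔
      Coordwise P i i' (t.eraseIdx k) ∧ P a a' (t.getD k 0) := by
  simp only [Coordwise, List.length_insertIdx, List.length_eraseIdx_of_lt hk,
    List.getD_eq_getElem?_getD, List.getElem?_insertIdx, List.getElem?_eraseIdx]
  constructor
  · rintro ⟨hi, hi', h⟩
    have hki : k ≤ i.length := by split_ifs at hi <;> omega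
    have hki' : k ≤ i'.length := by split_ifs at hi' <;> omega
    rw [if_pos hki] at hi
    rw [if_pos hki'] at hi'
    refine ⟨⟨by omega, by omega, fun l hl => ?_⟩, by simpa [hki, hki'] using h k hk⟩
    by_cases hlk : l < k
    · simpa [hlk] using h l (by omega)
    · simpa [show ¬ l + 1 < k by omega, show l + 1 ≠ k by omega, hlk] using h (l + 1) (by omega)
  · rintro ⟨⟨hi, hi', h⟩, hk'⟩
    refine ⟨by rw [if_pos (by omega)]; omega, by rw [if_pos (by omega)]; omega, fun l hl => ?_⟩
    rcases lt_trichotomy l k with hlk | rfl | hlk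
    · simpa [hlk] using h l (by omega)
    · simpa [show l ≤ i.length by omega, show l ≤ i'.length by omega] using hk'
    · simpa [show ¬ l < k by omega, show l ≠ k by omega, show ¬ l - 1 < k by omega,
        show l - 1 + 1 = l by omega] using h (l - 1) (by omega)

theorem coordwise_insert2_iff {i i' t : List ℕ} {m n a a' : ℕ} (hm : 1 ≤ m) (hmn : m < n)
    (hn : n ≤ t.length) :
    Coordwise P (insert2 i m n a) (insert2 i' m n a') t ↔
      Coordwise P i i' (delete2 t m n) ∧ P a a' (t.getD (m - 1) 0) ∧
        P a a' (t.getD (n - 1) 0) := by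
  have hmt : (t.eraseIdx (n - 1)).getD (m - 1) 0 = t.getD (m - 1) 0 := by
    simp only [List.getD_eq_getElem?_getD, List.getElem?_eraseIdx_of_lt (by omega : m - 1 < n - 1)]
  simp only [insert2]
  rw [coordwise_insertIdx_iff (by omega),
    coordwise_insertIdx_iff (by rw [List.length_eraseIdx_of_lt] <;> omega), hmt, delete2, and_assoc]

end Coordinates

def AgreesInBounds (t i i' : Index) : Prop :=
  Coordwise (fun a a' b => a ≤ b → a' = a) i i' t

section Indices

variable {i i' t t₀ t₁ : Index} {m n v w : ℕ}

theorem idxLe_nil_nil : IdxLe [] [] := ⟨rfl, fun _ h => absurd h (Nat.not_lt_zero _)⟩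

theorem idxLe_append_iff :
    IdxLe i (t₀ ++ t₁) ↔ IdxLe (i.take t₀.length) t₀ ∧ IdxLe (i.drop t₀.length) t₁ := by
  simp only [idxLe_iff_coordwise, coordwise_append_iff]

theorem idxLe_swapIdx_iff (hm : m - 1 < t.length) (hn : n - 1 < t.length) :
    IdxLe (swapIdx i m n) t ↔ IdxLe i (swapIdx t m n) := by
  simp only [idxLe_iff_coordwise, coordwise_swapIdx_iff hm hn]

theorem idxLe_insert2_iff (hm : 1 ≤ m) (hmn : m < n) (hn : n ≤ t.length) :
    IdxLe (insert2 i m n v) t ↔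
      IdxLe i (delete2 t m n) ∧ 1 ≤ v ∧ v ≤ t.getD (m - 1) 0 ∧ v ≤ t.getD (n - 1) 0 := by
  simp only [idxLe_iff_coordwise, coordwise_insert2_iff hm hmn hn]
  tauto

theorem AgreesInBounds.refl (h : i.length = t.length) : AgreesInBounds t i i :=
  ⟨h, h, fun _ _ _ => rfl⟩

theorem AgreesInBounds.eq_of_idxLe (hi : IdxLe i t) (h : AgreesInBounds t i i') : i' = i := by
  refine List.ext_getElem (h.2.1.trans h.1.symm) fun l hl' hl => ?_
  have := h.2.2 l (h.1 ▸ hl) (hi.2 l (h.1 ▸ hl)).2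
  rwa [List.getD_eq_getElem _ _ hl, List.getD_eq_getElem _ _ hl'] at this

theorem idxLe_insert2_iff_of_getD_eq (hm : 1 ≤ m) (hmn : m < n) (hn : n ≤ t.length)
    (hd : t.getD (m - 1) 0 = t.getD (n - 1) 0) (hi : IdxLe i (delete2 t m n)) :
    IdxLe (insert2 i m n v) t ↔ 1 ≤ v ∧ v ≤ t.getD (m - 1) 0 := by
  rw [idxLe_insert2_iff hm hmn hn, ← hd]
  tauto

theorem AgreesInBounds.insert2 (hm : 1 ≤ m) (hmn : m < n) (hn : n ≤ t.length)
    (hd : t.getD (m - 1) 0 = t.getD (n - 1) 0) (h : AgreesInBounds (delete2 t m n) i i')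
    (hvw : v ≤ t.getD (m - 1) 0 → w = v) :
    AgreesInBounds t (insert2 i m n v) (insert2 i' m n w) :=
  (coordwise_insert2_iff hm hmn hn).2 ⟨h, hvw, hd ▸ hvw⟩

theorem idxLe_insert2_padT_iff {M : ℕ} (hm : 1 ≤ m) (hmn : m < n) (hn : n ≤ t.length)
    (hd : t.getD (m - 1) 0 = t.getD (n - 1) 0) (hi : IdxLe i (padT M (delete2 t m n))) :
    IdxLe (insert2 i m n v) (padT M t) ↔ 1 ≤ v ∧ v ≤ roundUp M (t.getD (m - 1) 0) := by
  rw [padT_delete2] at hi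
  rw [idxLe_insert2_iff_of_getD_eq hm hmn (by simpa using hn)
    (by rw [getD_padT, getD_padT, hd]) hi, getD_padT]

end Indices

theorem Option.isSome_map₂ {α β γ : Type*} (f : α → β → γ) (a : Option α) (b : Option β) :
    (Option.map₂ f a b).isSome ↔ a.isSome ∧ b.isSome := by
  cases a <;> cases b <;> simp [Option.map₂]

section Values

variable {V : Type}

def IsPadValue [Zero V] (a : Option (W V)) (f : Index → Option (W V)) (S : Index → Prop) :
    Prop :=
  a = some (some 0) ∨ (a = some none ∧ ∀ j, S j → f j = some none)

theorem IsPadValue.comp [Zero V] {a : Option (W V)} {f : Index → Option (W V)}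
    {S S' : Index → Prop} (h : IsPadValue a f S) (p : Index → Index) (hp : ∀ j, S' j → S (p j)) :
    IsPadValue a (fun j => f (p j)) S' :=
  h.imp_right fun h => ⟨h.1, fun j hj => h.2 _ (hp j hj)⟩

theorem applyOp_none_left [Field V] [DecidableEq V] (op : Op) (w : W V) :
    applyOp op none w = none := by
  cases op <;> cases w <;> rfl

theorem IsPadValue.forall_of_eq_none [Zero V] {a : Option (W V)} {f : Index → Option (W V)}
    {S : Index → Prop} (h : IsPadValue a f S) (ha : a = some none) :
    ∀ j, S j → f j = some none :=
  (h.resolve_left (by simp [ha])).2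

variable {a₀ a₁ : Option (W V)} {f₀ f₁ : Index → Option (W V)} {S : Index → Prop}

theorem IsPadValue.map₂_applyOp [Field V] [DecidableEq V] (op : Op) (h₀ : IsPadValue a₀ f₀ S)
    (h₁ : IsPadValue a₁ f₁ S) (hf₀ : ∀ j, S j → (f₀ j).isSome)
    (hf₁ : ∀ j, S j → (f₁ j).isSome) :
    IsPadValue (Option.map₂ (applyOp op) a₀ a₁)
      (fun j => Option.map₂ (applyOp op) (f₀ j) (f₁ j)) S := by
  rcases h₀ with rfl | ⟨rfl, h₀⟩
  · rcases h₁ with rfl | ⟨rfl, h₁⟩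
    · left; cases op <;> simp [applyOp, wadd, wsub, wmul, wdiv, Option.map₂]
    · cases op
      -- controlled division: `0 / • = 0`
      case div => left; simp [applyOp, wdiv, Option.map₂]
      all_goals
        refine Or.inr ⟨rfl, fun j hj => ?_⟩
        obtain ⟨u, hu⟩ := Option.isSome_iff_exists.1 (hf₀ j hj)
        cases u <;> simp [hu, h₁ j hj, applyOp, wadd, wsub, wmul, Option.map₂]
  · refine Or.inr ⟨?_, fun j hj => ?_⟩
    · rcases h₁ with rfl | ⟨rfl, -⟩ <;> simp [Option.map₂, applyOp_none_left]
    · obtain ⟨u, hu⟩ := Option.isSome_iff_exists.1 (hf₁ j hj)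
      simp [h₀ j hj, hu, Option.map₂, applyOp_none_left]

theorem IsPadValue.map₂_wmul [MulZeroClass V] (h₀ : IsPadValue a₀ f₀ S) (h₁ : IsPadValue a₁ f₁ S)
    (hf₀ : ∀ j, S j → (f₀ j).isSome) (hf₁ : ∀ j, S j → (f₁ j).isSome) :
    IsPadValue (Option.map₂ wmul a₀ a₁) (fun j => Option.map₂ wmul (f₀ j) (f₁ j)) S := by
  rcases h₁ with rfl | ⟨rfl, h₁⟩
  · rcases h₀ with rfl | ⟨rfl, h₀⟩
    · simp [IsPadValue, Option.map₂, wmul]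
    · refine Or.inr ⟨rfl, fun j hj => ?_⟩
      obtain ⟨u, hu⟩ := Option.isSome_iff_exists.1 (hf₁ j hj)
      simp [h₀ j hj, hu, Option.map₂, wmul]
  · refine Or.inr ⟨by rcases h₀ with rfl | ⟨rfl, -⟩ <;> rfl, fun j hj => ?_⟩
    obtain ⟨u, hu⟩ := Option.isSome_iff_exists.1 (hf₀ j hj)
    cases u <;> simp [h₁ j hj, hu, Option.map₂, wmul]

theorem IsPadValue.map₂_wmul_left [MulZeroClass V] (h₀ : ∀ j, S j → f₀ j = a₀)
    (ha₀ : a₀.isSome) (h₁ : IsPadValue a₁ f₁ S) (hf₁ : ∀ j, S j → (f₁ j).isSome) :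
    IsPadValue (Option.map₂ wmul a₀ a₁) (fun j => Option.map₂ wmul (f₀ j) (f₁ j)) S := by
  obtain ⟨w₀ | w₀, rfl⟩ := Option.isSome_iff_exists.1 ha₀
  · refine Or.inr ⟨?_, fun j hj => ?_⟩
    · rcases h₁ with rfl | ⟨rfl, -⟩ <;> rfl
    · obtain ⟨u, hu⟩ := Option.isSome_iff_exists.1 (hf₁ j hj)
      simp [h₀ j hj, hu, Option.map₂, wmul]
  · rcases h₁ with rfl | ⟨rfl, h₁⟩
    · simp [IsPadValue, Option.map₂, wmul]
    · exact Or.inr ⟨rfl, fun j hj => by simp [h₀ j hj, h₁ j hj, Option.map₂, wmul]⟩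

theorem IsPadValue.map₂_wmul_right [MulZeroClass V] (h₀ : IsPadValue a₀ f₀ S)
    (hf₀ : ∀ j, S j → (f₀ j).isSome) (h₁ : ∀ j, S j → f₁ j = a₁) (ha₁ : a₁.isSome) :
    IsPadValue (Option.map₂ wmul a₀ a₁) (fun j => Option.map₂ wmul (f₀ j) (f₁ j)) S := by
  obtain ⟨w₁ | w₁, rfl⟩ := Option.isSome_iff_exists.1 ha₁
  · refine Or.inr ⟨?_, fun j hj => ?_⟩
    · rcases h₀ with rfl | ⟨rfl, -⟩ <;> rfl
    · obtain ⟨u, hu⟩ := Option.isSome_iff_exists.1 (hf₀ j hj)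
      cases u <;> simp [h₁ j hj, hu, Option.map₂, wmul]
  · rcases h₀ with rfl | ⟨rfl, h₀⟩
    · simp [IsPadValue, Option.map₂, wmul]
    · exact Or.inr ⟨rfl, fun j hj => by simp [h₀ j hj, h₁ j hj, Option.map₂, wmul]⟩

theorem IsPadValue.map₂_wdiv_right [Field V] [DecidableEq V] (h₀ : IsPadValue a₀ f₀ S)
    (h₁ : ∀ j, S j → f₁ j = a₁) (ha₁ : a₁.isSome) :
    IsPadValue (Option.map₂ wdiv a₀ a₁) (fun j => Option.map₂ wdiv (f₀ j) (f₁ j)) S := by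
  obtain ⟨w₁, rfl⟩ := Option.isSome_iff_exists.1 ha₁
  rcases h₀ with rfl | ⟨rfl, h₀⟩
  · left
    rcases w₁ with _ | w₁
    · simp [Option.map₂, wdiv]
    · by_cases hw : w₁ = 0 <;> simp [Option.map₂, wdiv, hw]
  · exact Or.inr ⟨rfl, fun j hj => by simp [h₀ j hj, h₁ j hj, Option.map₂, wdiv]⟩

end Values

section Sums

variable {V : Type} [AddZeroClass V] {c c' : ℕ → Option (W V)} {k K l : ℕ}

def wsum (k : ℕ) (c : ℕ → Option (W V)) : Option (W V) :=
  ((List.range k).mapM c).map (List.foldl wadd (some 0))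

theorem wsum_succ (k : ℕ) (c : ℕ → Option (W V)) :
    wsum (k + 1) c = Option.map₂ wadd (wsum k c) (c k) := by
  simp only [wsum, List.range_succ, List.mapM_append, List.mapM_cons, List.mapM_nil]
  rcases (List.range k).mapM c with _ | ws <;> rcases c k with _ | w <;>
    simp [Option.map₂, List.foldl_append]

theorem wsum_isSome (hc : ∀ l < k, (c l).isSome) : (wsum k c).isSome := by
  induction k with
  | zero => rfl
  | succ k ih =>
    obtain ⟨s, hs⟩ := Option.isSome_iff_exists.1 (ih fun l hl => hc l (by omega))
    obtain ⟨w, hw⟩ := Option.isSome_iff_exists.1 (hc k k.lt_succ_self)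
    simp [wsum_succ, hs, hw, Option.map₂]

theorem wsum_eq_none (hc : ∀ l < k, (c l).isSome) (hl : l < k) (hcl : c l = some none) :
    wsum k c = some none := by
  induction k with
  | zero => omega
  | succ k ih =>
    obtain ⟨s, hs⟩ :=
      Option.isSome_iff_exists.1 (wsum_isSome (k := k) fun l hl => hc l (by omega))
    obtain ⟨w, hw⟩ := Option.isSome_iff_exists.1 (hc k k.lt_succ_self)
    rcases Nat.lt_succ_iff_lt_or_eq.1 hl with hl | rfl
    · simp [wsum_succ, ih (fun l hl => hc l (by omega)) hl, hw, Option.map₂, wadd]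
    · cases s <;> simp [wsum_succ, hs, hcl, Option.map₂, wadd]

theorem wsum_congr (h : ∀ l < k, c l = c' l) : wsum k c = wsum k c' := by
  induction k with
  | zero => rfl
  | succ k ih => rw [wsum_succ, wsum_succ, ih fun l hl => h l (by omega), h k k.lt_succ_self]

theorem wsum_eq_of_eq_zero (hkK : k ≤ K) (h : ∀ l, k ≤ l → l < K → c l = some (some 0)) :
    wsum K c = wsum k c := by
  induction K, hkK using Nat.le_induction with
  | base => rfl
  | succ K hkK ih =>
    rw [wsum_succ, h K hkK K.lt_succ_self, ih fun l hl hlK => h l hl (by omega)]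
    rcases wsum k c with _ | _ | s <;> simp [Option.map₂, wadd]

theorem wsum_eq_or_eq_none (hkK : k ≤ K) (hc : ∀ l < K, (c l).isSome)
    (h : ∀ l, k ≤ l → l < K → c l = some (some 0) ∨ c l = some none) :
    wsum K c = wsum k c ∨
      (wsum K c = some none ∧ ∃ l, k ≤ l ∧ l < K ∧ c l = some none) := by
  by_cases hnone : ∃ l, k ≤ l ∧ l < K ∧ c l = some none
  · obtain ⟨l, hkl, hlK, hcl⟩ := hnone
    exact Or.inr ⟨wsum_eq_none hc hlK hcl, l, hkl, hlK, hcl⟩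
  · push Not at hnone
    exact Or.inl <| wsum_eq_of_eq_zero hkK fun l hl hlK =>
      (h l hl hlK).resolve_right (hnone l hl hlK)

end Sums

section IsPadding

variable {V : Type} {M : ℕ} {t t₀ t₁ : Ty} {m n : ℕ} {f g f₀ g₀ f₁ g₁ : Index → Option (W V)}

structure IsPadding [Zero V] (M : ℕ) (t : Ty) (f g : Index → Option (W V)) : Prop where
  isSome : ∀ i, IdxLe i t → (f i).isSome
  eq : ∀ i, IdxLe i t → g i = f i
  pad : ∀ i, PadReg M t i →
    IsPadValue (g i) f fun i' => IdxLe i' t ∧ AgreesInBounds t i i'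

section Zero

variable [Zero V]

theorem IsPadding.eq_of_agreesInBounds (h : IsPadding M t f g) {i : Index} (hi : IdxLe i t) :
    ∀ j, IdxLe j t ∧ AgreesInBounds t i j → f j = g i := by
  rintro j ⟨-, hij⟩
  rw [hij.eq_of_idxLe hi, h.eq i hi]

theorem IsPadding.isSome_padded (h : IsPadding M t f g) {i : Index} (hi : IdxLe i (padT M t)) :
    (g i).isSome := by
  by_cases hv : IdxLe i t
  · rw [h.eq i hv]; exact h.isSome i hv
  · rcases h.pad i ⟨hv, hi⟩ with h0 | ⟨h0, -⟩ <;> simp [h0]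

theorem IsPadding.comp_swapIdx (h : IsPadding M t f g) (hm : 1 ≤ m) (hmn : m < n)
    (hn : n ≤ t.length) :
    IsPadding M (swapIdx t m n) (fun i => f (swapIdx i m n)) (fun i => g (swapIdx i m n)) := by
  have hle {i : Index} : IdxLe i (swapIdx t m n) ↔ IdxLe (swapIdx i m n) t :=
    (idxLe_swapIdx_iff (by omega) (by omega)).symm
  have hle_pad {i : Index} :
      IdxLe i (padT M (swapIdx t m n)) ↔ IdxLe (swapIdx i m n) (padT M t) := by
    rw [padT_swapIdx, idxLe_swapIdx_iff] <;> simp only [padT_length] <;> omega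
  refine ⟨fun i hi => h.isSome _ (hle.1 hi), fun i hi => h.eq _ (hle.1 hi),
    fun i hi => (h.pad _ ⟨mt hle.2 hi.1, hle_pad.1 hi.2⟩).comp _ fun j hj => ⟨hle.1 hj.1, ?_⟩⟩
  exact (coordwise_swapIdx_iff (by omega) (by omega)).2 hj.2

end Zero

theorem IsPadding.map₂_applyOp [Field V] [DecidableEq V] (op : Op) (h₀ : IsPadding M t f₀ g₀)
    (h₁ : IsPadding M t f₁ g₁) :
    IsPadding M t (fun i => Option.map₂ (applyOp op) (f₀ i) (f₁ i))
      (fun i => Option.map₂ (applyOp op) (g₀ i) (g₁ i)) where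
  isSome i hi := (Option.isSome_map₂ _ _ _).2 ⟨h₀.isSome i hi, h₁.isSome i hi⟩
  eq i hi := by rw [h₀.eq i hi, h₁.eq i hi]
  pad i hi := (h₀.pad i hi).map₂_applyOp op (h₁.pad i hi) (fun j hj => h₀.isSome j hj.1)
    (fun j hj => h₁.isSome j hj.1)

theorem IsPadding.smul [MulZeroClass V] (h₀ : IsPadding M [] f₀ g₀) (h₁ : IsPadding M t f₁ g₁) :
    IsPadding M t (fun i => Option.map₂ wmul (f₀ []) (f₁ i))
      (fun i => Option.map₂ wmul (g₀ []) (g₁ i)) where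
  isSome i hi := (Option.isSome_map₂ _ _ _).2 ⟨h₀.isSome [] idxLe_nil_nil, h₁.isSome i hi⟩
  eq i hi := by rw [h₀.eq [] idxLe_nil_nil, h₁.eq i hi]
  pad i hi := IsPadValue.map₂_wmul_left (fun _ _ => (h₀.eq [] idxLe_nil_nil).symm)
    (h₀.isSome_padded idxLe_nil_nil) (h₁.pad i hi) (fun j hj => h₁.isSome j hj.1)

theorem IsPadding.sdiv [Field V] [DecidableEq V] (h₀ : IsPadding M t f₀ g₀)
    (h₁ : IsPadding M [] f₁ g₁) :
    IsPadding M t (fun i => Option.map₂ wdiv (f₀ i) (f₁ []))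
      (fun i => Option.map₂ wdiv (g₀ i) (g₁ [])) where
  isSome i hi := (Option.isSome_map₂ _ _ _).2 ⟨h₀.isSome i hi, h₁.isSome [] idxLe_nil_nil⟩
  eq i hi := by rw [h₀.eq i hi, h₁.eq [] idxLe_nil_nil]
  pad i hi := IsPadValue.map₂_wdiv_right (h₀.pad i hi)
    (fun _ _ => (h₁.eq [] idxLe_nil_nil).symm) (h₁.isSome_padded idxLe_nil_nil)

theorem IsPadding.prod [MulZeroClass V] (h₀ : IsPadding M t₀ f₀ g₀) (h₁ : IsPadding M t₁ f₁ g₁) :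
    IsPadding M (t₀ ++ t₁)
      (fun i => Option.map₂ wmul (f₀ (i.take t₀.length)) (f₁ (i.drop t₀.length)))
      (fun i => Option.map₂ wmul (g₀ (i.take t₀.length)) (g₁ (i.drop t₀.length))) := by
  refine ⟨fun i hi => ?_, fun i hi => ?_, fun i ⟨hni, hpi⟩ => ?_⟩
  · obtain ⟨hi₀, hi₁⟩ := idxLe_append_iff.1 hi
    exact (Option.isSome_map₂ _ _ _).2 ⟨h₀.isSome _ hi₀, h₁.isSome _ hi₁⟩
  · obtain ⟨hi₀, hi₁⟩ := idxLe_append_iff.1 hi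
    rw [h₀.eq _ hi₀, h₁.eq _ hi₁]
  rw [padT_append, idxLe_append_iff, padT_length] at hpi
  obtain ⟨hp₀, hp₁⟩ := hpi
  have hS {j : Index} (hj : IdxLe j (t₀ ++ t₁) ∧ AgreesInBounds (t₀ ++ t₁) i j) :
      (IdxLe (j.take t₀.length) t₀ ∧ AgreesInBounds t₀ (i.take t₀.length) (j.take t₀.length)) ∧
      (IdxLe (j.drop t₀.length) t₁ ∧ AgreesInBounds t₁ (i.drop t₀.length) (j.drop t₀.length)) := by
    have := idxLe_append_iff.1 hj.1
    have := coordwise_append_iff.1 hj.2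
    tauto
  have hf₀ j hj := h₀.isSome _ (hS (j := j) hj).1.1
  have hf₁ j hj := h₁.isSome _ (hS (j := j) hj).2.1
  by_cases hv₀ : IdxLe (i.take t₀.length) t₀ <;> by_cases hv₁ : IdxLe (i.drop t₀.length) t₁
  · exact absurd (idxLe_append_iff.2 ⟨hv₀, hv₁⟩) hni
  · exact IsPadValue.map₂_wmul_left
      (fun j hj => h₀.eq_of_agreesInBounds hv₀ _ (hS hj).1) (h₀.isSome_padded hp₀)
      ((h₁.pad _ ⟨hv₁, hp₁⟩).comp _ fun _ hj => (hS hj).2) hf₁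
  · exact IsPadValue.map₂_wmul_right ((h₀.pad _ ⟨hv₀, hp₀⟩).comp _ fun _ hj => (hS hj).1) hf₀
      (fun j hj => h₁.eq_of_agreesInBounds hv₁ _ (hS hj).2) (h₁.isSome_padded hp₁)
  · exact ((h₀.pad _ ⟨hv₀, hp₀⟩).comp _ fun _ hj => (hS hj).1).map₂_wmul
      ((h₁.pad _ ⟨hv₁, hp₁⟩).comp _ fun _ hj => (hS hj).2) hf₀ hf₁

end IsPadding

section Contraction

variable {V : Type} [AddZeroClass V] {M : ℕ} {t : Ty} {m n : ℕ} {i : Index}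
  {f g : Index → Option (W V)}

theorem IsPadding.wsum_insert2_eq (hM : 1 ≤ M) (h : IsPadding M t f g) (hm : 1 ≤ m)
    (hmn : m < n) (hn : n ≤ t.length) (hd : t.getD (m - 1) 0 = t.getD (n - 1) 0)
    (hi : IdxLe i (delete2 t m n)) :
    (wsum (roundUp M (t.getD (m - 1) 0)) fun l => g (insert2 i m n (l + 1))) =
      wsum (t.getD (m - 1) 0) fun l => f (insert2 i m n (l + 1)) := by
  set d := t.getD (m - 1) 0
  have hvalid {v : ℕ} := idxLe_insert2_iff_of_getD_eq (v := v) hm hmn hn hd hi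
  have hpadded {v : ℕ} := idxLe_insert2_padT_iff (v := v) hm hmn hn hd (hi.padT hM)
  have hpad : ∀ l, d ≤ l → l < roundUp M d → PadReg M t (insert2 i m n (l + 1)) :=
    fun l hl hlD => ⟨fun hv => by have := (hvalid.1 hv).2; omega, hpadded.2 ⟨by omega, hlD⟩⟩
  rcases wsum_eq_or_eq_none (le_roundUp hM d)
      (fun l hl => h.isSome_padded (hpadded.2 ⟨by omega, hl⟩))
      (fun l hl hlD => Or.imp id And.left (h.pad _ (hpad l hl hlD)))
    with heq | ⟨hnone, l, hdl, hlD, hl⟩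
  · rw [heq]
    exact wsum_congr fun l hl => h.eq _ (hvalid.2 ⟨by omega, hl⟩)
  -- the `•` term `l` of the padding agrees with the first term of the unpadded sum
  have hfirst := (h.pad _ (hpad l hdl hlD)).forall_of_eq_none hl (insert2 i m n 1)
    ⟨hvalid.2 ⟨le_rfl, pos_of_lt_roundUp hlD⟩, (AgreesInBounds.refl hi.1).insert2 hm hmn hn hd
      (by omega)⟩
  rw [hnone, wsum_eq_none (fun l hl => h.isSome _ (hvalid.2 ⟨by omega, hl⟩))
    (pos_of_lt_roundUp hlD) hfirst]

theorem IsPadding.isPadValue_wsum_insert2 (h : IsPadding M t f g) (hm : 1 ≤ m) (hmn : m < n)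
    (hn : n ≤ t.length) (hd : t.getD (m - 1) 0 = t.getD (n - 1) 0)
    (hi : PadReg M (delete2 t m n) i) :
    IsPadValue (wsum (roundUp M (t.getD (m - 1) 0)) fun l => g (insert2 i m n (l + 1)))
      (fun i' => wsum (t.getD (m - 1) 0) fun l => f (insert2 i' m n (l + 1)))
      fun i' => IdxLe i' (delete2 t m n) ∧ AgreesInBounds (delete2 t m n) i i' := by
  set d := t.getD (m - 1) 0
  have hpad : ∀ l < roundUp M d, PadReg M t (insert2 i m n (l + 1)) := fun l hl =>
    ⟨fun hv => hi.1 ((idxLe_insert2_iff hm hmn hn).1 hv).1,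
      (idxLe_insert2_padT_iff hm hmn hn hd hi.2).2 ⟨by omega, hl⟩⟩
  rcases wsum_eq_or_eq_none (Nat.zero_le _) (fun l hl => h.isSome_padded (hpad l hl).2)
      (fun l _ hl => Or.imp id And.left (h.pad _ (hpad l hl)))
    with h0 | ⟨hnone, l, -, hlD, hl⟩
  · exact Or.inl h0
  refine Or.inr ⟨hnone, fun i' ⟨hi', hii'⟩ => ?_⟩
  have hvalid {v : ℕ} := idxLe_insert2_iff_of_getD_eq (v := v) hm hmn hn hd hi'
  -- the term `v` of the unpadded sum at `i'` agrees with the `•` term `l` of the padding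
  set v := if l + 1 ≤ d then l + 1 else 1
  have hv : 1 ≤ v ∧ v ≤ d := by
    have := pos_of_lt_roundUp hlD
    simp only [v]
    split_ifs <;> omega
  have hterm := (h.pad _ (hpad l hlD)).forall_of_eq_none hl (insert2 i' m n v)
    ⟨hvalid.2 hv, hii'.insert2 hm hmn hn hd fun hle => if_pos hle⟩
  rw [← Nat.sub_add_cancel hv.1] at hterm
  exact wsum_eq_none (fun l hl => h.isSome _ (hvalid.2 ⟨by omega, hl⟩)) (by omega) hterm

theorem IsPadding.contract (hM : 1 ≤ M) (h : IsPadding M t f g) (hm : 1 ≤ m) (hmn : m < n)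
    (hn : n ≤ t.length) (hd : t.getD (m - 1) 0 = t.getD (n - 1) 0) :
    IsPadding M (delete2 t m n)
      (fun i => wsum (t.getD (m - 1) 0) fun l => f (insert2 i m n (l + 1)))
      (fun i => wsum (roundUp M (t.getD (m - 1) 0)) fun l => g (insert2 i m n (l + 1))) where
  isSome i hi := wsum_isSome fun l hl =>
    h.isSome _ ((idxLe_insert2_iff_of_getD_eq hm hmn hn hd hi).2 ⟨by omega, hl⟩)
  eq i hi := h.wsum_insert2_eq hM hm hmn hn hd hi
  pad i hi := h.isPadValue_wsum_insert2 hm hmn hn hd hi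

end Contraction

section Eval

variable {Γ : Ctx} {e e₀ e₁ : Expr} {t t₀ t₁ : Ty} {m n : ℕ}

theorem inferTy_of_hasTy (h : HasTy Γ e t) : inferTy Γ e = some t := by
  induction h with
  | var h => simpa [inferTy]
  | paren _ ih => simpa [inferTy]
  | prod _ _ ih₀ ih₁ => simp [inferTy, ih₀, ih₁]
  | trans _ hm hmn hn ih => simp [inferTy, ih, hm, hmn, hn]
  | contr _ hm hmn hn hd ih =>
    simp only [List.getD_eq_getElem?_getD] at hd
    simp [inferTy, ih, hm, hmn, hn, hd]
  | elem _ _ ih₀ ih₁ => simp [inferTy, ih₀, ih₁]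
  | smul _ _ ih₀ ih₁ => simp [inferTy, ih₀, ih₁]
  | sdiv _ _ ih₀ ih₁ => simp [inferTy, ih₀, ih₁]

theorem HasTy.pad (M : ℕ) (h : HasTy Γ e t) : HasTy (padCtx M Γ) e (padT M t) := by
  induction h with
  | var h => exact .var (by simp [padCtx, h])
  | paren _ ih => exact .paren ih
  | prod _ _ ih₀ ih₁ => rw [padT_append]; exact .prod ih₀ ih₁
  | trans _ hm hmn hn ih =>
    rw [padT_swapIdx]; exact .trans ih hm hmn (by simpa using hn)
  | contr _ hm hmn hn hd ih =>
    rw [padT_delete2]; exact .contr ih hm hmn (by simpa using hn) (by rw [getD_padT, getD_padT, hd])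
  | elem _ _ ih₀ ih₁ => exact .elem ih₀ ih₁
  | smul _ _ ih₀ ih₁ => exact .smul ih₀ ih₁
  | sdiv _ _ ih₀ ih₁ => exact .sdiv ih₀ ih₁

variable {V : Type} [Field V] [DecidableEq V] {μ : Store V}

theorem eval_prod (h : inferTy Γ e₀ = some t₀) :
    eval Γ μ (.prod e₀ e₁) = fun i =>
      Option.map₂ wmul (eval Γ μ e₀ (i.take t₀.length)) (eval Γ μ e₁ (i.drop t₀.length)) := by
  funext i
  simp [eval, h, Option.map₂, Option.map_eq_bind]

theorem eval_contr (h : inferTy Γ e = some t) :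
    eval Γ μ (.contr e m n) =
      fun i => wsum (t.getD (m - 1) 0) fun l => eval Γ μ e (insert2 i m n (l + 1)) := by
  funext i
  simp [eval, h, wsum, Option.map_eq_bind]

theorem eval_binop (op : Op) (h₀ : inferTy Γ e₀ = some t₀) (h₁ : inferTy Γ e₁ = some t₁) :
    eval Γ μ (.binop op e₀ e₁) = fun i =>
      if op = .mul ∧ t₀ = [] then Option.map₂ wmul (eval Γ μ e₀ []) (eval Γ μ e₁ i)
      else if op = .div ∧ t₁ = [] then Option.map₂ wdiv (eval Γ μ e₀ i) (eval Γ μ e₁ [])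
      else Option.map₂ (applyOp op) (eval Γ μ e₀ i) (eval Γ μ e₁ i) := by
  funext i
  simp [eval, h₀, h₁, Option.map₂, Option.map_eq_bind]

end Eval

theorem isPadding_eval {V : Type} [Field V] [DecidableEq V] {M : ℕ} (hM : 1 ≤ M) {Γ : Ctx}
    {μ₁ μ₂ : Store V} (h1 : ∀ x t, Γ x = some t → ∀ i, IdxLe i t → μ₁ (x, i) ≠ none)
    (heq : ∀ x t, Γ x = some t → ∀ i, IdxLe i t → μ₂ (x, i) = μ₁ (x, i))
    (hz : ∀ x t, Γ x = some t → ∀ i, PadReg M t i → μ₂ (x, i) = some (some 0))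
    {e : Expr} {t : Ty} (h : HasTy Γ e t) :
    IsPadding M t (eval Γ μ₁ e) (eval (padCtx M Γ) μ₂ e) := by
  induction h with
  | var hx => exact ⟨fun i hi => Option.isSome_iff_ne_none.2 (h1 _ _ hx i hi), heq _ _ hx,
      fun i hi => Or.inl (hz _ _ hx i hi)⟩
  | paren _ ih => exact ih
  | prod h₀ _ ih₀ ih₁ =>
    rw [eval_prod (inferTy_of_hasTy h₀), eval_prod (inferTy_of_hasTy (h₀.pad M)), padT_length]
    exact ih₀.prod ih₁
  | trans _ hm hmn hn ih => exact ih.comp_swapIdx hm hmn hn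
  | contr h hm hmn hn hd ih =>
    rw [eval_contr (inferTy_of_hasTy h), eval_contr (inferTy_of_hasTy (h.pad M)), getD_padT]
    exact ih.contract hM hm hmn hn hd
  | @elem op _ _ t h₀ h₁ ih₀ ih₁ =>
    rw [eval_binop op (inferTy_of_hasTy h₀) (inferTy_of_hasTy h₁),
      eval_binop op (inferTy_of_hasTy (h₀.pad M)) (inferTy_of_hasTy (h₁.pad M))]
    simp only [padT_eq_nil]
    by_cases hmul : op = .mul ∧ t = []
    · obtain ⟨rfl, rfl⟩ := hmul
      simpa using ih₀.smul ih₁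
    by_cases hdiv : op = .div ∧ t = []
    · obtain ⟨rfl, rfl⟩ := hdiv
      simpa using ih₀.sdiv ih₁
    simpa only [if_neg hmul, if_neg hdiv] using ih₀.map₂_applyOp op ih₁
  | smul h₀ h₁ ih₀ ih₁ =>
    rw [eval_binop _ (inferTy_of_hasTy h₀) (inferTy_of_hasTy h₁),
      eval_binop _ (inferTy_of_hasTy (h₀.pad M)) (inferTy_of_hasTy (h₁.pad M))]
    simpa [padT] using ih₀.smul ih₁
  | sdiv h₀ h₁ ih₀ ih₁ =>
    rw [eval_binop _ (inferTy_of_hasTy h₀) (inferTy_of_hasTy h₁),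
      eval_binop _ (inferTy_of_hasTy (h₀.pad M)) (inferTy_of_hasTy (h₁.pad M))]
    simpa [padT] using ih₀.sdiv ih₁

theorem eval_agreement_general (V : Type) [Field V] [DecidableEq V] (M : ℕ) (hM : 1 ≤ M)
    (Γ : Ctx) (μ₁ μ₂ : Store V)
    (h1 : ∀ x t, Γ x = some t → ∀ i, IdxLe i t → μ₁ (x, i) ≠ none)
    (heq : ∀ x t, Γ x = some t → ∀ i, IdxLe i t → μ₂ (x, i) = μ₁ (x, i))
    (hz : ∀ x t, Γ x = some t → ∀ i, PadReg M t i → μ₂ (x, i) = some (some 0))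
    {e : Expr} {t : Ty} (h : HasTy Γ e t) :
    ∀ i, IdxLe i t → eval Γ μ₁ e i = eval (padCtx M Γ) μ₂ e i :=
  fun i hi => ((isPadding_eval hM h1 heq hz h).eq i hi).symm

/-- **Evaluation agreement under padding**: if `μ₁` contains the unpadded domain,
`μ₂` contains the padded domain, `μ₂` agrees with `μ₁` on `i ≤ Γ(x)` and is zero
on padding regions, then for `Γ ⊢ e : t` the unpadded and padded evaluations
agree for every `i ≤ t`. -/
theorem eval_agreement (V : Type) [Field V] [DecidableEq V] (M : ℕ) (hM : 1 ≤ M)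
    (Γ : Ctx) (μ₁ μ₂ : Store V)
    (h1 : ∀ x t, Γ x = some t → ∀ i, IdxLe i t → μ₁ (x, i) ≠ none)
    (h2 : ∀ x t, Γ x = some t → ∀ i, IdxLe i (padT M t) → μ₂ (x, i) ≠ none)
    (heq : ∀ x t, Γ x = some t → ∀ i, IdxLe i t → μ₂ (x, i) = μ₁ (x, i))
    (hz : ∀ x t, Γ x = some t → ∀ i, PadReg M t i → μ₂ (x, i) = some (some 0))
    {e : Expr} {t : Ty} (h : HasTy Γ e t) :
    ∀ i, IdxLe i t → eval Γ μ₁ e i = eval (padCtx M Γ) μ₂ e i :=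
  eval_agreement_general V M hM Γ μ₁ μ₂ h1 heq hz h
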